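/- arXiv:1111.4025 — 7 statements merged into one kernel-verified Lean document; each statement's English description precedes it below -/
import Mathlib

section
/- Let q be a nonzero scalar and let u₁,v₁,u₂,v₂ be elements of a noncommutative algebra satisfying u₁v₁ = q²v₁u₁, u₂v₂ = q²v₂u₂, and all pairs with distinct indices commute (u₁u₂=u₂u₁, u₁v₂=v₂u₁, v₁u₂=u₂v₁, v₁v₂=v₂v₁). Define z₁₁ = u₁, z₁₂ = u₁u₂, z₂₁ = v₁u₁, z₂₂ = v₁u₁u₂ + v₂. Then these satisfy the GL_q(2) relations: z₁₁z₁₂ = z₁₂z₁₁, z₂₁z₂₂ = z₂₂z₂₁, z₁₁z₂₁ = q²z₂₁z₁₁, z₁₂z₂₂ = q²z₂₂z₁₂, z₁₂z₂₁ = q²z₂₁z₁₂, and z₁₁z₂₂ − z₁₂z₂₁ = z₂₂z₁₁ − z₂₁z₁₂. -/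
/-! Writing the Weyl relation `u * v = q² • (v * u)` as `SemiconjBy u v (q² • v)`, each
`q`-commutation relation among the `zᵢⱼ` is assembled from the Weyl relations and the
commutations of the two pairs by the closure properties of `SemiconjBy` under products and
sums. Both sides of the determinant identity reduce to `u₁ * v₂ = v₂ * u₁`, because `u₂`
commutes with `v₁ * u₁`. -/

section SmulSemiconj

variable {M α : Type*} [Semigroup α] [SMul M α] [IsScalarTower M α α]

theorem semiconjBy_smul_self_iff {a x : α} {c : M} :
    SemiconjBy a x (c • x) ↔ a * x = c • (x * a) := by
  rw [SemiconjBy, smul_mul_assoc]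

theorem SemiconjBy.mul_commute_smul_self {a x y : α} {c : M}
    (hx : SemiconjBy a x (c • x)) (hy : Commute a y) : SemiconjBy a (x * y) (c • (x * y)) := by
  simpa only [smul_mul_assoc] using hx.mul_right hy

end SmulSemiconj

theorem stmt0_general {K R : Type*} [Field K] [Ring R] [Algebra K R]
    (q : K) (u₁ v₁ u₂ v₂ : R)
    (h1 : u₁ * v₁ = q ^ 2 • (v₁ * u₁))
    (h2 : u₂ * v₂ = q ^ 2 • (v₂ * u₂))
    (h3 : u₁ * u₂ = u₂ * u₁) (h4 : u₁ * v₂ = v₂ * u₁)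
    (h5 : v₁ * u₂ = u₂ * v₁) (h6 : v₁ * v₂ = v₂ * v₁) :
    let z₁₁ := u₁
    let z₁₂ := u₁ * u₂
    let z₂₁ := v₁ * u₁
    let z₂₂ := v₁ * u₁ * u₂ + v₂
    (z₁₁ * z₁₂ = z₁₂ * z₁₁) ∧ (z₂₁ * z₂₂ = z₂₂ * z₂₁) ∧
    (z₁₁ * z₂₁ = q ^ 2 • (z₂₁ * z₁₁)) ∧ (z₁₂ * z₂₂ = q ^ 2 • (z₂₂ * z₁₂)) ∧
    (z₁₂ * z₂₁ = q ^ 2 • (z₂₁ * z₁₂)) ∧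
    (z₁₁ * z₂₂ - z₁₂ * z₂₁ = z₂₂ * z₁₁ - z₂₁ * z₁₂) := by
  intro z₁₁ z₁₂ z₂₁ z₂₂
  have hu₂ : Commute (v₁ * u₁) u₂ := Commute.mul_left h5 h3
  have hv₂ : Commute (v₁ * u₁) v₂ := Commute.mul_left h6 h4
  have h₁₁₂₁ : SemiconjBy u₁ (v₁ * u₁) (q ^ 2 • (v₁ * u₁)) :=
    (semiconjBy_smul_self_iff.2 h1).mul_commute_smul_self (Commute.refl u₁)
  have h₁₂₂₁ : SemiconjBy (u₁ * u₂) (v₁ * u₁) (q ^ 2 • (v₁ * u₁)) := h₁₁₂₁.mul_left hu₂.symm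
  have h₁₂v₂ : SemiconjBy (u₁ * u₂) v₂ (q ^ 2 • v₂) :=
    SemiconjBy.mul_left (Commute.smul_right h4 _) (semiconjBy_smul_self_iff.2 h2)
  have h₁₂₂₂ : SemiconjBy (u₁ * u₂) z₂₂ (q ^ 2 • z₂₂) := by
    rw [smul_add]
    exact (h₁₂₂₁.mul_commute_smul_self (Commute.mul_left h3 (Commute.refl u₂))).add_right h₁₂v₂
  have hdet_left : z₁₁ * z₂₂ - z₁₂ * z₂₁ = u₁ * v₂ := by
    simp only [z₁₁, z₁₂, z₂₁, z₂₂]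
    rw [hu₂.eq]
    noncomm_ring
  have hdet_right : z₂₂ * z₁₁ - z₂₁ * z₁₂ = v₂ * u₁ := by
    simp only [z₁₁, z₁₂, z₂₁, z₂₂]
    rw [add_mul, mul_assoc (v₁ * u₁) u₂ u₁, ← h3]
    noncomm_ring
  exact ⟨(Commute.refl u₁).mul_right h3, ((Commute.refl _).mul_right hu₂).add_right hv₂,
    semiconjBy_smul_self_iff.1 h₁₁₂₁, semiconjBy_smul_self_iff.1 h₁₂₂₂,
    semiconjBy_smul_self_iff.1 h₁₂₂₁, hdet_left.trans (h4.trans hdet_right.symm)⟩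

/-- Gauss decomposition of `GL_q(2)`: the entries defined from two commuting
Weyl pairs satisfy the GL_q(2) relations. -/
theorem stmt0 {K R : Type*} [Field K] [Ring R] [Algebra K R]
    (q : K) (hq : q ≠ 0) (u₁ v₁ u₂ v₂ : R)
    (h1 : u₁ * v₁ = q ^ 2 • (v₁ * u₁))
    (h2 : u₂ * v₂ = q ^ 2 • (v₂ * u₂))
    (h3 : u₁ * u₂ = u₂ * u₁) (h4 : u₁ * v₂ = v₂ * u₁)
    (h5 : v₁ * u₂ = u₂ * v₁) (h6 : v₁ * v₂ = v₂ * v₁) :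
    let z₁₁ := u₁
    let z₁₂ := u₁ * u₂
    let z₂₁ := v₁ * u₁
    let z₂₂ := v₁ * u₁ * u₂ + v₂
    (z₁₁ * z₁₂ = z₁₂ * z₁₁) ∧ (z₂₁ * z₂₂ = z₂₂ * z₂₁) ∧
    (z₁₁ * z₂₁ = q ^ 2 • (z₂₁ * z₁₁)) ∧ (z₁₂ * z₂₂ = q ^ 2 • (z₂₂ * z₁₂)) ∧
    (z₁₂ * z₂₁ = q ^ 2 • (z₂₁ * z₁₂)) ∧
    (z₁₁ * z₂₂ - z₁₂ * z₂₁ = z₂₂ * z₁₁ - z₂₁ * z₁₂) :=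
  stmt0_general q u₁ v₁ u₂ v₂ h1 h2 h3 h4 h5 h6
end

section
/- If X = (x_{ij}) and Y = (y_{ij}) are N×N matrices with entries in a noncommutative algebra such that every 2×2 minor of X satisfies the GL_q(2) relations, every 2×2 minor of Y satisfies the GL_q(2) relations, and every entry of X commutes with every entry of Y, then every 2×2 minor of the matrix product G = XY also satisfies the GL_q(2) relations. -/
/-!
Because the entries of `X` commute with those of `Y`,
`(XY)ₚᵣ (XY)ₚ'ᵣ' = ∑ₖ ∑ₗ (xₚₖ xₚ'ₗ) (yₖᵣ yₗᵣ')`. Each GL_q(2) relation of a minor of `XY` is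
therefore an identity between two such double sums, and it holds term by term: the diagonal
terms `k = l` agree by the relations within one column of `X` and one row of `Y`, and for `k < l`
the terms `(k, l)` and `(l, k)` agree together by the relations of the minor of `X` in
columns `k, l` and of the minor of `Y` in rows `k, l`.
-/

/-- The GL_q(2) relations for a quadruple `(a,b,c,d)` sitting in positions
`(1,1), (1,2), (2,1), (2,2)` of a 2×2 minor. -/
def GLq2Rel {K R : Type*} [CommSemiring K] [Ring R] [Algebra K R]
    (q : K) (a b c d : R) : Prop :=
  a * b = b * a ∧ c * d = d * c ∧ a * c = q ^ 2 • (c * a) ∧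
  b * d = q ^ 2 • (d * b) ∧ b * c = q ^ 2 • (c * b) ∧
  a * d - b * c = d * a - c * b

/-- An N×N matrix is a `GL_q(N)` matrix if all its 2×2 minors satisfy the
GL_q(2) relations. -/
def IsGLqMatrix {K R : Type*} [CommSemiring K] [Ring R] [Algebra K R]
    (q : K) {N : ℕ} (Z : Matrix (Fin N) (Fin N) R) : Prop :=
  ∀ i i' j j' : Fin N, i < i' → j < j' →
    GLq2Rel q (Z i j) (Z i j') (Z i' j) (Z i' j')

theorem Fintype.sum_sum_eq_of_diag_of_swap {ι M : Type*} [Fintype ι] [LinearOrder ι]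
    [AddCommGroup M] {f g : ι → ι → M} (hdiag : ∀ k, f k k = g k k)
    (hswap : ∀ k l, k < l → f k l + f l k = g k l + g l k) :
    ∑ k, ∑ l, f k l = ∑ k, ∑ l, g k l := by
  rw [← sub_eq_zero]
  simp only [← Finset.sum_sub_distrib]
  rw [← Finset.sum_product']
  refine Finset.sum_ninvolution (fun p => (p.2, p.1)) (fun p => ?_) (fun p hp hfix => ?_)
    (by simp) (by simp)
  · rcases lt_trichotomy p.1 p.2 with h | h | h
    · rw [sub_add_sub_comm, hswap _ _ h, sub_self]
    · simp [h, hdiag]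
    · rw [add_comm, sub_add_sub_comm, hswap _ _ h, sub_self]
  · have h : p.2 = p.1 := congrArg Prod.fst hfix
    exact hp (by rw [← hfix, h, hdiag, sub_self])

theorem Matrix.mul_apply_mul_mul_apply_of_commute {m n o R : Type*} [Fintype n] [Ring R]
    {X : Matrix m n R} {Y : Matrix n o R} (hcomm : ∀ i j k l, Commute (X i j) (Y k l))
    (p p' : m) (r r' : o) :
    (X * Y) p r * (X * Y) p' r' = ∑ k, ∑ l, X p k * X p' l * (Y k r * Y l r') := by
  simp only [Matrix.mul_apply, Finset.sum_mul_sum]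
  exact Finset.sum_congr rfl fun k _ => Finset.sum_congr rfl fun l _ =>
    (hcomm p' l k r).symm.mul_mul_mul_comm _ _

namespace IsGLqMatrix

variable {N : ℕ} {i i' j j' : Fin N}

section CommSemiring

variable {K R : Type*} [CommSemiring K] [Ring R] [Algebra K R] {q : K}
  {X Y Z : Matrix (Fin N) (Fin N) R}

theorem row_commute [Nontrivial (Fin N)] (hZ : IsGLqMatrix q Z) (p : Fin N) (hj : j < j') :
    Z p j * Z p j' = Z p j' * Z p j := by
  obtain ⟨p', hp'⟩ := exists_ne p
  rcases hp'.lt_or_gt with h | h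
  · exact (hZ p' p j j' h hj).2.1
  · exact (hZ p p' j j' h hj).1

theorem col_qcommute [Nontrivial (Fin N)] (hZ : IsGLqMatrix q Z) (hi : i < i') (r : Fin N) :
    Z i r * Z i' r = q ^ 2 • (Z i' r * Z i r) := by
  obtain ⟨r', hr'⟩ := exists_ne r
  rcases hr'.lt_or_gt with h | h
  · exact (hZ i i' r' r hi h).2.2.2.1
  · exact (hZ i i' r r' hi h).2.2.1

theorem mul_row_commute [Nontrivial (Fin N)] (hX : IsGLqMatrix q X) (hY : IsGLqMatrix q Y)
    (hcomm : ∀ i j k l, Commute (X i j) (Y k l)) (p : Fin N) (hj : j < j') :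
    (X * Y) p j * (X * Y) p j' = (X * Y) p j' * (X * Y) p j := by
  simp only [Matrix.mul_apply_mul_mul_apply_of_commute hcomm]
  refine Fintype.sum_sum_eq_of_diag_of_swap (fun k => ?_) (fun k l hkl => ?_)
  · rw [hY.row_commute k hj]
  · have hY6 := (hY k l j j' hkl hj).2.2.2.2.2
    rw [hX.row_commute p hkl, ← mul_add, ← mul_add, eq_add_of_sub_eq hY6]
    noncomm_ring

end CommSemiring

section CommRing

variable {K R : Type*} [CommRing K] [Ring R] [Algebra K R] {q : K}
  {X Y : Matrix (Fin N) (Fin N) R} [Nontrivial (Fin N)]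

theorem mul_col_qcommute (hX : IsGLqMatrix q X) (hY : IsGLqMatrix q Y)
    (hcomm : ∀ i j k l, Commute (X i j) (Y k l)) (hi : i < i') (r : Fin N) :
    (X * Y) i r * (X * Y) i' r = q ^ 2 • ((X * Y) i' r * (X * Y) i r) := by
  simp only [Matrix.mul_apply_mul_mul_apply_of_commute hcomm, Finset.smul_sum]
  refine Fintype.sum_sum_eq_of_diag_of_swap (fun k => ?_) (fun k l hkl => ?_)
  · rw [hX.col_qcommute hi k, smul_mul_assoc]
  · obtain ⟨-, -, -, -, hX5, hX6⟩ := hX i i' k l hi hkl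
    rw [eq_add_of_sub_eq hX6, hX5, hY.col_qcommute hkl r]
    simp only [add_mul, sub_mul, smul_mul_assoc, mul_smul_comm, smul_add, smul_sub, smul_smul]
    module

theorem mul_antidiag_qcommute (hX : IsGLqMatrix q X) (hY : IsGLqMatrix q Y)
    (hcomm : ∀ i j k l, Commute (X i j) (Y k l)) (hi : i < i') (hj : j < j') :
    (X * Y) i j' * (X * Y) i' j = q ^ 2 • ((X * Y) i' j * (X * Y) i j') := by
  simp only [Matrix.mul_apply_mul_mul_apply_of_commute hcomm, Finset.smul_sum]
  refine Fintype.sum_sum_eq_of_diag_of_swap (fun k => ?_) (fun k l hkl => ?_)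
  · rw [hX.col_qcommute hi k, hY.row_commute k hj, smul_mul_assoc]
  · obtain ⟨-, -, -, -, hX5, hX6⟩ := hX i i' k l hi hkl
    obtain ⟨-, -, -, -, hY5, hY6⟩ := hY k l j j' hkl hj
    rw [eq_add_of_sub_eq hX6, hX5, eq_add_of_sub_eq hY6, hY5]
    simp only [add_mul, sub_mul, mul_add, mul_sub, smul_mul_assoc, mul_smul_comm, smul_add,
      smul_sub, smul_smul]
    module

theorem mul_det_symm (hX : IsGLqMatrix q X) (hY : IsGLqMatrix q Y)
    (hcomm : ∀ i j k l, Commute (X i j) (Y k l)) (hi : i < i') (hj : j < j') :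
    (X * Y) i j * (X * Y) i' j' - (X * Y) i j' * (X * Y) i' j =
      (X * Y) i' j' * (X * Y) i j - (X * Y) i' j * (X * Y) i j' := by
  simp only [Matrix.mul_apply_mul_mul_apply_of_commute hcomm, ← Finset.sum_sub_distrib]
  refine Fintype.sum_sum_eq_of_diag_of_swap (fun k => ?_) (fun k l hkl => ?_)
  · rw [hY.row_commute k hj, sub_self, sub_self]
  · obtain ⟨-, -, -, -, hX5, hX6⟩ := hX i i' k l hi hkl
    obtain ⟨-, -, -, -, hY5, hY6⟩ := hY k l j j' hkl hj
    rw [eq_add_of_sub_eq hX6, hX5, eq_add_of_sub_eq hY6, hY5]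
    simp only [add_mul, sub_mul, mul_add, mul_sub, smul_mul_assoc, mul_smul_comm, smul_add,
      smul_sub, smul_smul]
    module

end CommRing

end IsGLqMatrix

theorem stmt2_general {K R : Type*} [Field K] [Ring R] [Algebra K R]
    (q : K) (N : ℕ) (X Y : Matrix (Fin N) (Fin N) R)
    (hX : IsGLqMatrix q X) (hY : IsGLqMatrix q Y)
    (hcomm : ∀ i j k l : Fin N, Commute (X i j) (Y k l)) :
    IsGLqMatrix q (X * Y) := by
  intro i i' j j' hi hj
  have : Nontrivial (Fin N) := nontrivial_of_lt i i' hi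
  exact ⟨hX.mul_row_commute hY hcomm i hj, hX.mul_row_commute hY hcomm i' hj,
    hX.mul_col_qcommute hY hcomm hi j, hX.mul_col_qcommute hY hcomm hi j',
    hX.mul_antidiag_qcommute hY hcomm hi hj, hX.mul_det_symm hY hcomm hi hj⟩

/-- If `X` and `Y` are `GL_q(N)` matrices whose entries mutually commute, then
`X * Y` is again a `GL_q(N)` matrix. -/
theorem stmt2 {K R : Type*} [Field K] [Ring R] [Algebra K R]
    (q : K) (hq : q ≠ 0) (N : ℕ) (X Y : Matrix (Fin N) (Fin N) R)
    (hX : IsGLqMatrix q X) (hY : IsGLqMatrix q Y)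
    (hcomm : ∀ i j k l : Fin N, Commute (X i j) (Y k l)) :
    IsGLqMatrix q (X * Y) :=
  stmt2_general q N X Y hX hY hcomm
end

section
/- Let (a,b,c) be elements of an algebra with q-commutation relations ca = q²ac, ab = q²ba, and bc = cb, with a+c invertible. Define a' = (a+c)⁻¹cb, b' = a+c, c' = (a+c)⁻¹ab. Then: (1) a' = bc(a+c)⁻¹ and c' = ba(a+c)⁻¹; (2) the new triple satisfies the mirrored relations b'c' = q²c'b', c'a' = q²a'c', and a'b' = b'a'; (3) the map φ: (a,b,c) ↦ (a',b',c') is an involution, i.e. applying the analogous transformation to (a',b',c') recovers (a,b,c). -/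
/-!
Put `s = a + c`, a unit with inverse `e`. The relations make `c * b` commute with `s`, while
`s * (b * a) = (a * b) * s` and `s * (a * b) = q² • (a * b) * s`; conjugating by `e` gives
`e * (c * b) = (c * b) * e`, `e * (a * b) = (b * a) * e` and `e * (q² • (a * b)) = (a * b) * e`.
Together with `(a * b) * (c * b) = (c * b) * (a * b)`, every claim then follows by moving `e`
across and cancelling it against `s`.
-/

section QCommute

variable {K R : Type*} [CommSemiring K] [Semiring R] [Algebra K R] {t : K}

theorem commute_mul_of_smul_comm {x y z : R}
    (hxy : x * y = t • (y * x)) (hzx : z * x = t • (x * z)) : Commute x (y * z) := by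
  rw [Commute, SemiconjBy, ← mul_assoc, hxy, mul_assoc, hzx, smul_mul_assoc, mul_smul_comm,
    mul_assoc]

variable {a b c : R}

theorem semiconjBy_add_smul_mul (hca : c * a = t • (a * c)) (hab : a * b = t • (b * a))
    (hbc : b * c = c * b) : SemiconjBy (a + c) (a * b) (t • (a * b)) := by
  have hca_b : c * (a * b) = t • (a * b * c) := by
    rw [← mul_assoc, hca, smul_mul_assoc, mul_assoc, ← hbc, mul_assoc]
  rw [SemiconjBy, smul_mul_assoc, add_mul, hca_b, mul_add, smul_add]
  congr 1
  rw [hab, mul_smul_comm, ← hab, mul_assoc]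

theorem semiconjBy_add_mul_swap (ha : Commute a (b * c)) (hbc : b * c = c * b) :
    SemiconjBy (a + c) (b * a) (a * b) := by
  rw [SemiconjBy, eq_comm, mul_add, add_mul, mul_assoc, mul_assoc, ha.eq, hbc, mul_assoc]

theorem commute_mul_add (ha : Commute a (b * c)) (hbc : b * c = c * b) :
    Commute (c * b) (a + c) := by
  have hcb : Commute (c * b) a := hbc ▸ ha.symm
  exact hcb.add_right ((Commute.refl c).mul_left hbc)

theorem commute_mul_mul (ha : Commute a (b * c)) (hbc : b * c = c * b) :
    Commute (a * b) (c * b) := by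
  calc a * b * (c * b) = a * (b * c) * b := by simp only [mul_assoc]
    _ = c * b * (a * b) := by rw [ha.eq, hbc]; simp only [mul_assoc]

end QCommute

theorem stmt3_general {K R : Type*} [Field K] [Ring R] [Algebra K R]
    (q : K) (a b c e binv : R)
    (hca : c * a = q ^ 2 • (a * c))
    (hab : a * b = q ^ 2 • (b * a))
    (hbc : b * c = c * b)
    (he1 : e * (a + c) = 1) (he2 : (a + c) * e = 1)
    (hb2 : b * binv = 1) :
    let a' := e * c * b
    let b' := a + c
    let c' := e * a * b
    -- (1) the two expressions for a' and c' agree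
    (a' = b * c * e ∧ c' = b * a * e) ∧
    -- (2) the mirrored q-commutation relations
    (b' * c' = q ^ 2 • (c' * b') ∧ c' * a' = q ^ 2 • (a' * c') ∧
      a' * b' = b' * a') ∧
    -- (3) the map is an involution: applying the analogous transformation
    -- to (a',b',c') recovers (a,b,c)
    (a' + c' = b ∧ b' * c' * binv = a ∧ b' * a' * binv = c) := by
  dsimp only
  let s : Rˣ := ⟨a + c, e, he2, he1⟩
  have ha : Commute a (b * c) := commute_mul_of_smul_comm hab hca
  have hcs : Commute (c * b) s := commute_mul_add ha hbc
  have hcb : Commute e (c * b) := hcs.symm.units_inv_left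
  have hab_conj : e * (a * b) = b * a * e :=
    (semiconjBy_add_mul_swap ha hbc).units_inv_symm_left (a := s)
  have hab_smul : e * (q ^ 2 • (a * b)) = a * b * e :=
    (semiconjBy_add_smul_mul hca hab hbc).units_inv_symm_left (a := s)
  refine ⟨⟨?_, ?_⟩, ⟨?_, ?_, ?_⟩, ?_, ?_, ?_⟩
  · rw [mul_assoc, hcb.eq, hbc]
  · rw [mul_assoc, hab_conj]
  · rw [mul_assoc e, ← mul_assoc, he2, one_mul, ← smul_mul_assoc, ← mul_smul_comm, hab_smul,
      mul_assoc, he1, mul_one]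
  · calc e * a * b * (e * c * b) = e * (a * b * e) * (c * b) := by simp only [mul_assoc]
      _ = q ^ 2 • (e * e * (a * b * (c * b))) := by
        rw [← hab_smul]
        simp only [mul_smul_comm, smul_mul_assoc, mul_assoc]
      _ = q ^ 2 • (e * (c * b * e) * (a * b)) := by
        rw [(commute_mul_mul ha hbc).eq, ← hcb.eq]
        simp only [mul_assoc]
      _ = q ^ 2 • (e * c * b * (e * a * b)) := by simp only [mul_assoc]
  · rw [mul_assoc e c b]
    exact s.commute_inv_coe.mul_left hcs
  · rw [mul_assoc, mul_assoc, ← mul_add, ← add_mul, add_comm c a, ← mul_assoc, he1, one_mul]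
  · rw [mul_assoc e, ← mul_assoc, he2, one_mul, mul_assoc, hb2, mul_one]
  · rw [mul_assoc e, ← mul_assoc, he2, one_mul, mul_assoc, hb2, mul_one]

/-- The quantum change of Lusztig parametrization between the reduced words
`s₂s₁s₂` and `s₁s₂s₁`: properties of `a' = (a+c)⁻¹cb`, `b' = a+c`,
`c' = (a+c)⁻¹ab`, including that the transformation is an involution. -/
theorem stmt3 {K R : Type*} [Field K] [Ring R] [Algebra K R]
    (q : K) (hq : q ≠ 0) (a b c e binv : R)
    (hca : c * a = q ^ 2 • (a * c))
    (hab : a * b = q ^ 2 • (b * a))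
    (hbc : b * c = c * b)
    (he1 : e * (a + c) = 1) (he2 : (a + c) * e = 1)
    (hb1 : binv * b = 1) (hb2 : b * binv = 1) :
    let a' := e * c * b
    let b' := a + c
    let c' := e * a * b
    -- (1) the two expressions for a' and c' agree
    (a' = b * c * e ∧ c' = b * a * e) ∧
    -- (2) the mirrored q-commutation relations
    (b' * c' = q ^ 2 • (c' * b') ∧ c' * a' = q ^ 2 • (a' * c') ∧
      a' * b' = b' * a') ∧
    -- (3) the map is an involution: applying the analogous transformation
    -- to (a',b',c') recovers (a,b,c)
    (a' + c' = b ∧ b' * c' * binv = a ∧ b' * a' * binv = c) :=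
  stmt3_general q a b c e binv hca hab hbc he1 he2 hb2
end

section
/- For nonnegative integers i,j,k,l with j ≤ l, define P(i,j;k,l) = #{(m,n) : l+2 ≤ m+n ≤ k+l+1, 1 ≤ m ≤ i, 1 ≤ n ≤ j} − #{(m,n) : 1 ≤ m+n ≤ i, 1 ≤ m ≤ k, 1 ≤ n ≤ l}. Then P(i,j;k,l) = P(i,j−1;k,l−1) whenever j ≥ 1 and l ≥ 1. -/
/-!
Peel one row `n = const` off each of the two lattice-point counts. In the first count remove the
bottom row `n = 1`; shifting the remaining rows down by one turns `(j, l)` into `(j - 1, l - 1)`.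
In the second count remove the top row `n = l`. The two removed rows, `{l + 1 ≤ m ≤ k + l, m ≤ i}`
and `{1 ≤ m ≤ k, m + l ≤ i}`, correspond under `m ↦ m + l`, so they cancel in the difference.
-/

/-- The counting function `P(i,j;k,l)` (defined for `j ≤ l`) giving the power
of `q²` in the quasi-commutation of quantum cluster variables. -/
def Pfun (i j k l : ℕ) : ℤ :=
  (((Finset.Icc 1 i ×ˢ Finset.Icc 1 j).filter
      (fun p => l + 2 ≤ p.1 + p.2 ∧ p.1 + p.2 ≤ k + l + 1)).card : ℤ) -
  (((Finset.Icc 1 k ×ˢ Finset.Icc 1 l).filter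
      (fun p => 1 ≤ p.1 + p.2 ∧ p.1 + p.2 ≤ i)).card : ℤ)

open Finset

theorem card_filter_product_eq_sum {α β : Type*} (s : Finset α) (t : Finset β)
    (p : α × β → Prop) [DecidablePred p] : #{q ∈ s ×ˢ t | p q} = ∑ b ∈ t, #{a ∈ s | p (a, b)} := by
  simp only [card_filter, sum_product_right]

section RowPeeling

variable {α : Type*} (s : Finset α) (j : ℕ) (p : α × ℕ → Prop) [DecidablePred p]

theorem card_filter_product_Icc_succ_top :
    #{q ∈ s ×ˢ Icc 1 (j + 1) | p q} = #{q ∈ s ×ˢ Icc 1 j | p q} + #{a ∈ s | p (a, j + 1)} := by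
  simp only [card_filter_product_eq_sum]
  exact sum_Icc_succ_top (by omega) _

theorem card_filter_product_Icc_succ_bot :
    #{q ∈ s ×ˢ Icc 1 (j + 1) | p q} =
      #{a ∈ s | p (a, 1)} + #{q ∈ s ×ˢ Icc 1 j | p (q.1, q.2 + 1)} := by
  simp only [card_filter_product_eq_sum]
  rw [← insert_Icc_add_one_left_eq_Icc (by omega : 1 ≤ j + 1), sum_insert (by simp),
    ← map_add_right_Icc, sum_map]
  rfl

end RowPeeling

theorem card_filter_Icc_shift (i k l : ℕ) :
    #{m ∈ Icc 1 i | l + 2 ≤ m ∧ m ≤ k + l + 1} = #{m ∈ Icc 1 k | m + l + 1 ≤ i} := by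
  refine card_nbij' (· - (l + 1)) (· + (l + 1)) ?_ ?_ ?_ ?_ <;> intro m hm <;>
    simp only [coe_filter, mem_Icc, Set.mem_ofPred_eq] at hm ⊢ <;> omega

theorem stmt4_general (i j k l : ℕ) (hj : 1 ≤ j) (hl : 1 ≤ l) :
    Pfun i j k l = Pfun i (j - 1) k (l - 1) := by
  obtain ⟨j, rfl⟩ : ∃ j', j = j' + 1 := ⟨j - 1, by omega⟩
  obtain ⟨l, rfl⟩ : ∃ l', l = l' + 1 := ⟨l - 1, by omega⟩
  simp only [Pfun, add_tsub_cancel_right]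
  rw [card_filter_product_Icc_succ_bot, card_filter_product_Icc_succ_top]
  have shifted_rows :
      {q ∈ Icc 1 i ×ˢ Icc 1 j | l + 1 + 2 ≤ q.1 + (q.2 + 1) ∧ q.1 + (q.2 + 1) ≤ k + (l + 1) + 1} =
        {q ∈ Icc 1 i ×ˢ Icc 1 j | l + 2 ≤ q.1 + q.2 ∧ q.1 + q.2 ≤ k + l + 1} :=
    filter_congr fun _ _ ↦ by omega
  have removed_rows_agree :
      #{m ∈ Icc 1 i | l + 1 + 2 ≤ m + 1 ∧ m + 1 ≤ k + (l + 1) + 1} =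
        #{m ∈ Icc 1 k | 1 ≤ m + (l + 1) ∧ m + (l + 1) ≤ i} := by
    convert card_filter_Icc_shift i k l using 3 <;> omega
  rw [shifted_rows, removed_rows_agree]
  push_cast
  ring

/-- `P(i,j;k,l) = P(i,j−1;k,l−1)` for `1 ≤ j ≤ l`. -/
theorem stmt4 (i j k l : ℕ) (hj : 1 ≤ j) (hl : 1 ≤ l) (hjl : j ≤ l) :
    Pfun i j k l = Pfun i (j - 1) k (l - 1) :=
  stmt4_general i j k l hj hl
end

section
/- The function P on quadruples of nonnegative integers defined by P(i,j;k,l) = #{(m,n) : l+2 ≤ m+n ≤ k+l+1, 1 ≤ m ≤ i, 1 ≤ n ≤ j} − #{(m,n) : 1 ≤ m+n ≤ i, 1 ≤ m ≤ k, 1 ≤ n ≤ l} for j ≤ l, extended by P(k,l;i,j) = −P(i,j;k,l), is well-defined and antisymmetric: in the overlap case j = l, the formula satisfies P(i,j;k,j) = −P(k,j;i,j), i.e. #{(m,n) : j+2 ≤ m+n ≤ k+j+1, 1 ≤ m ≤ i, 1 ≤ n ≤ j} − #{(m,n) : 1 ≤ m+n ≤ i, 1 ≤ m ≤ k, 1 ≤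 n ≤ j} = −(#{(m,n) : j+2 ≤ m+n ≤ i+j+1, 1 ≤ m ≤ k, 1 ≤ n ≤ j} − #{(m,n) : 1 ≤ m+n ≤ k, 1 ≤ m ≤ i, 1 ≤ n ≤ j}). -/
/-- The shear `(m, n) ↦ (m + n - (j + 1), j + 1 - n)`, with inverse `(a, b) ↦ (a + b, j + 1 - b)`,
maps the first set bijectively onto the second. -/
theorem card_filter_sum_mem_Icc_eq_card_filter_sum_le (i j k : ℕ) :
    ((Finset.Icc 1 i ×ˢ Finset.Icc 1 j).filter
        (fun p => j + 2 ≤ p.1 + p.2 ∧ p.1 + p.2 ≤ k + j + 1)).card =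
    ((Finset.Icc 1 k ×ˢ Finset.Icc 1 j).filter
        (fun p => 1 ≤ p.1 + p.2 ∧ p.1 + p.2 ≤ i)).card := by
  apply Finset.card_bij' (fun p _ => (p.1 + p.2 - (j + 1), j + 1 - p.2))
    (fun p _ => (p.1 + p.2, j + 1 - p.2)) <;>
  · rintro ⟨m, n⟩ hmn
    simp only [Finset.mem_filter, Finset.mem_product, Finset.mem_Icc, Prod.ext_iff] at *
    omega

/-- Antisymmetry of the exponent function `P` in the overlap case `j = l`:
`P(i,j;k,j) = −P(k,j;i,j)`, written out in terms of the defining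
cardinalities. -/
theorem stmt9 (i j k : ℕ) :
    (((Finset.Icc 1 i ×ˢ Finset.Icc 1 j).filter
        (fun p => j + 2 ≤ p.1 + p.2 ∧ p.1 + p.2 ≤ k + j + 1)).card : ℤ) -
      (((Finset.Icc 1 k ×ˢ Finset.Icc 1 j).filter
        (fun p => 1 ≤ p.1 + p.2 ∧ p.1 + p.2 ≤ i)).card : ℤ) =
    -((((Finset.Icc 1 k ×ˢ Finset.Icc 1 j).filter
        (fun p => j + 2 ≤ p.1 + p.2 ∧ p.1 + p.2 ≤ i + j + 1)).card : ℤ) -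
      (((Finset.Icc 1 i ×ˢ Finset.Icc 1 j).filter
        (fun p => 1 ≤ p.1 + p.2 ∧ p.1 + p.2 ≤ k)).card : ℤ)) := by
  rw [card_filter_sum_mem_Icc_eq_card_filter_sum_le i j k,
    card_filter_sum_mem_Icc_eq_card_filter_sum_le k j i]
  ring
end

section
/- Let q ≠ 0 and let {v_m : 1 ≤ m ≤ N−1} and {a_{m,n} : 1 ≤ n ≤ m ≤ N−1} be generators of an algebra satisfying: a_{m,n} v_m = q² v_m a_{m,n}; a_{m,n} a_{m,n'} = q² a_{m,n'} a_{m,n} for n > n'; a_{m,n} a_{m−1,n'} = q² a_{m−1,n'} a_{m,n} for n ≤ n'; and all other pairs commute. For N = 3, the matrix Z = T⁺U⁺, where T⁺ = diag(1, v₁, v₂) and U⁺ = (I + a_{1,1}E_{12} + a_{2,1}E_{23})(I + a_{2,2}E_{23}), is a GL_q(3) matrix: every 2×2 minor of Z satisfies the GL_q(2) relations. -/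
section

variable {K R : Type*} [CommSemiring K] [Semiring R] [Algebra K R]

def QCommute (s : K) (a b : R) : Prop :=
  a * b = s • (b * a)

namespace QCommute

variable {s t : K} {a b c : R}

theorem of_commute (h : Commute a b) : QCommute (1 : K) a b := by
  rw [QCommute, one_smul, h.eq]

theorem zero_right (s : K) (a : R) : QCommute s a 0 := by
  simp [QCommute]

theorem mul_left (hac : QCommute s a c) (hbc : QCommute t b c) :
    QCommute (s * t) (a * b) c := by
  unfold QCommute at *
  rw [mul_assoc, hbc, mul_smul_comm, ← mul_assoc, hac, smul_mul_assoc, smul_smul, mul_comm t,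
    mul_assoc]

theorem mul_right (hab : QCommute s a b) (hac : QCommute t a c) :
    QCommute (s * t) a (b * c) := by
  unfold QCommute at *
  rw [← mul_assoc, hab, smul_mul_assoc, mul_assoc, hac, mul_smul_comm, smul_smul, ← mul_assoc]

theorem add_left (hac : QCommute s a c) (hbc : QCommute s b c) : QCommute s (a + b) c := by
  unfold QCommute at *
  rw [add_mul, hac, hbc, mul_add, smul_add]

theorem add_right (hab : QCommute s a b) (hac : QCommute s a c) : QCommute s a (b + c) := by
  unfold QCommute at *
  rw [mul_add, hab, hac, add_mul, smul_add]

theorem commute_mul (hbc : QCommute s b c) (hca : QCommute s c a) : Commute (a * b) c := by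
  unfold QCommute at *
  rw [Commute, SemiconjBy, mul_assoc, hbc, mul_smul_comm, ← mul_assoc c, hca, smul_mul_assoc,
    mul_assoc]

end QCommute

end

section

variable {K R : Type*} [CommSemiring K] [Ring R] [Algebra K R] {q : K}

theorem GLq2Rel.of_lower_left_eq_zero {a b d : R} (hab : Commute a b)
    (hbd : QCommute (q ^ 2) b d) (had : Commute a d) : GLq2Rel q a b 0 d :=
  ⟨hab.eq, by simp, by simp, hbd, by simp, by simp [had.eq]⟩

theorem isGLqMatrix_of_upper_triangular {a b v w t : R}
    (hav : QCommute (q ^ 2) a v) (hbv : QCommute (q ^ 2) b v) (hbw : QCommute (q ^ 2) b w)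
    (hbt : QCommute (q ^ 2) b t) (hwt : QCommute (q ^ 2) w t)
    (hab : Commute a b) (hvw : Commute v w) (hat : Commute a t) (hvt : Commute v t)
    (hdet : a * w - b * v = w * a - v * b) :
    IsGLqMatrix q !![1, a, b; 0, v, w; 0, 0, t] := by
  intro i i' j j' hi hj
  fin_cases i <;> fin_cases i' <;> fin_cases j <;> fin_cases j' <;>
    first
    | exact absurd hi (by decide)
    | exact absurd hj (by decide)
    | exact ⟨hab.eq, hvw.eq, hav, hbw, hbv, hdet⟩
    | refine GLq2Rel.of_lower_left_eq_zero ?_ ?_ ?_ <;>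
        first
          | assumption
          | exact Commute.one_left _
          | exact Commute.zero_left _
          | exact QCommute.zero_right _ _

theorem qdet_eq_of_qCommute {v₁ a₁₁ a₂₁ a₂₂ : R} (h1 : QCommute (q ^ 2) a₁₁ v₁)
    (h5 : QCommute (q ^ 2) a₂₁ a₁₁) (h6 : Commute a₂₂ a₁₁) (h9 : Commute a₂₂ v₁) :
    a₁₁ * (v₁ * (a₂₁ + a₂₂)) - a₁₁ * a₂₂ * v₁ = v₁ * (a₂₁ + a₂₂) * a₁₁ - v₁ * (a₁₁ * a₂₂) := by
  unfold QCommute at h1 h5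
  calc a₁₁ * (v₁ * (a₂₁ + a₂₂)) - a₁₁ * a₂₂ * v₁ = a₁₁ * v₁ * a₂₁ := by
        rw [mul_assoc a₁₁ a₂₂, h9.eq]; noncomm_ring
    _ = q ^ 2 • (v₁ * (a₁₁ * a₂₁)) := by rw [h1, smul_mul_assoc, mul_assoc]
    _ = v₁ * (a₂₁ * a₁₁) := by rw [h5, mul_smul_comm]
    _ = v₁ * (a₂₁ + a₂₂) * a₁₁ - v₁ * (a₁₁ * a₂₂) := by rw [← h6.eq]; noncomm_ring

end

theorem stmt10_general {K R : Type*} [Field K] [Ring R] [Algebra K R]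
    (q : K) (v₁ v₂ a₁₁ a₂₁ a₂₂ : R)
    (h1 : a₁₁ * v₁ = q ^ 2 • (v₁ * a₁₁))
    (h2 : a₂₁ * v₂ = q ^ 2 • (v₂ * a₂₁))
    (h3 : a₂₂ * v₂ = q ^ 2 • (v₂ * a₂₂))
    (h4 : a₂₂ * a₂₁ = q ^ 2 • (a₂₁ * a₂₂))
    (h5 : a₂₁ * a₁₁ = q ^ 2 • (a₁₁ * a₂₁))
    (h6 : Commute a₂₂ a₁₁)
    (h7 : Commute a₁₁ v₂)
    (h8 : Commute a₂₁ v₁)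
    (h9 : Commute a₂₂ v₁)
    (h10 : Commute v₁ v₂) :
    IsGLqMatrix q
      ((Matrix.of ![![(1 : R), 0, 0], ![0, v₁, 0], ![0, 0, v₂]]) *
        ((1 + Matrix.single 0 1 a₁₁ + Matrix.single 1 2 a₂₁) *
          (1 + Matrix.single 1 2 a₂₂))) := by
  have hZ : (Matrix.of ![![(1 : R), 0, 0], ![0, v₁, 0], ![0, 0, v₂]]) *
        ((1 + Matrix.single 0 1 a₁₁ + Matrix.single 1 2 a₂₁) * (1 + Matrix.single 1 2 a₂₂)) =
      !![1, a₁₁, a₁₁ * a₂₂; 0, v₁, v₁ * (a₂₁ + a₂₂); 0, 0, v₂] := by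
    ext i j
    fin_cases i <;> fin_cases j <;>
      simp [Matrix.mul_apply, Fin.sum_univ_three, Matrix.single, Matrix.one_apply, add_comm]
  rw [hZ]
  have hbv₁ : QCommute (q ^ 2) (a₁₁ * a₂₂) v₁ := by
    simpa using QCommute.mul_left h1 (.of_commute h9)
  have hbw : QCommute (q ^ 2) (a₁₁ * a₂₂) (v₁ * (a₂₁ + a₂₂)) := by
    have hba₂₁ : Commute (a₁₁ * a₂₂) a₂₁ := QCommute.commute_mul (s := q ^ 2) h4 h5
    have hba₂₂ : Commute (a₁₁ * a₂₂) a₂₂ := h6.symm.mul_left (.refl a₂₂)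
    simpa using hbv₁.mul_right (.of_commute (hba₂₁.add_right hba₂₂))
  have hbv₂ : QCommute (q ^ 2) (a₁₁ * a₂₂) v₂ := by
    simpa using QCommute.mul_left (.of_commute h7) h3
  have hwv₂ : QCommute (q ^ 2) (v₁ * (a₂₁ + a₂₂)) v₂ := by
    simpa using QCommute.mul_left (.of_commute h10) (QCommute.add_left h2 h3)
  exact isGLqMatrix_of_upper_triangular h1 hbv₁ hbw hbv₂ hwv₂
    ((Commute.refl a₁₁).mul_right h6.symm)
    ((Commute.refl v₁).mul_right (h8.symm.add_right h9.symm)) h7 h10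
    (qdet_eq_of_qCommute h1 h5 h6 h9)

/-- For `N = 3`, the product `Z = T⁺U⁺` of the Gauss–Lusztig decomposition,
with `T⁺ = diag(1,v₁,v₂)` and
`U⁺ = (I + a₁₁E₁₂ + a₂₁E₂₃)(I + a₂₂E₂₃)`, is a `GL_q(3)` matrix. -/
theorem stmt10 {K R : Type*} [Field K] [Ring R] [Algebra K R]
    (q : K) (hq : q ≠ 0) (v₁ v₂ a₁₁ a₂₁ a₂₂ : R)
    (h1 : a₁₁ * v₁ = q ^ 2 • (v₁ * a₁₁))
    (h2 : a₂₁ * v₂ = q ^ 2 • (v₂ * a₂₁))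
    (h3 : a₂₂ * v₂ = q ^ 2 • (v₂ * a₂₂))
    (h4 : a₂₂ * a₂₁ = q ^ 2 • (a₂₁ * a₂₂))
    (h5 : a₂₁ * a₁₁ = q ^ 2 • (a₁₁ * a₂₁))
    (h6 : Commute a₂₂ a₁₁)
    (h7 : Commute a₁₁ v₂)
    (h8 : Commute a₂₁ v₁)
    (h9 : Commute a₂₂ v₁)
    (h10 : Commute v₁ v₂) :
    IsGLqMatrix q
      ((Matrix.of ![![(1 : R), 0, 0], ![0, v₁, 0], ![0, 0, v₂]]) *
        ((1 + Matrix.single 0 1 a₁₁ + Matrix.single 1 2 a₂₁) *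
          (1 + Matrix.single 1 2 a₂₂))) :=
  stmt10_general q v₁ v₂ a₁₁ a₂₁ a₂₂ h1 h2 h3 h4 h5 h6 h7 h8 h9 h10
end

section
/- With generators {v_m, a_{m,n}} satisfying the q-commutation relations of the Gauss–Lusztig decomposition (a_{m,n}v_m = q²v_m a_{m,n}; a_{m,n}a_{m,n'} = q²a_{m,n'}a_{m,n} for n>n'; a_{m,n}a_{m−1,n'} = q²a_{m−1,n'}a_{m,n} for n ≤ n'; all other pairs commute), the (i, i+j) entry of the matrix Z = T⁺U⁺ equals z_{i,i+j} = v_{i−1} · Σ_{1 ≤ t₁ < t₂ < ... < t_j ≤ i+j−1} a_{i,t₁} a_{i+1,t₂} ⋯ a_{i+j−1,t_j}, with z_{i,i} = 1 and z_{i,i−j} = 0 for j ≥ 1 (and v₀ := 1). -/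
/-- The `n`-th bidiagonal factor of `U⁺` in the canonical reduced word for
`w₀`: the matrix `I + Σ_{m=n}^{N−1} a_{m,n}E_{m,m+1}` (1-based indices). -/
def GLfactor {R : Type*} [Ring R] (N : ℕ) (a : ℕ → ℕ → R) (n : ℕ) :
    Matrix (Fin N) (Fin N) R :=
  Matrix.of fun i j =>
    if (i : ℕ) + 1 = (j : ℕ) ∧ n ≤ (i : ℕ) + 1 then a ((i : ℕ) + 1) n
    else if i = j then 1 else 0

/-- The matrix `Z = T⁺U⁺` of the Gauss–Lusztig decomposition, with
`T⁺ = diag(1, v₁, …, v_{N−1})` (encoded via `v 0 = 1`) and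
`U⁺` the ordered product of the bidiagonal factors for `n = 1, …, N−1`. -/
def GLmatrix {R : Type*} [Ring R] (N : ℕ) (a : ℕ → ℕ → R) (v : ℕ → R) :
    Matrix (Fin N) (Fin N) R :=
  Matrix.diagonal (fun i : Fin N => v (i : ℕ)) *
    ((List.range (N - 1)).map (fun t => GLfactor N a (t + 1))).prod

/-!
Write `F_n` for the `n`-th bidiagonal factor, so that `Z = T⁺ F_1 ⋯ F_{N-1}`. By induction on `k`,
the entry `(i, j)` of `F_1 ⋯ F_k` is the sum of the monomials `a_{i+1,t_1} ⋯ a_{j,t_{j-i}}` over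
strictly increasing column tuples with entries in `[1, min k j]` (0-based row indices). Multiplying by
`F_{k+1}` keeps every such monomial and appends the factor `a_{j,k+1}` to the monomials of the entry
`(i, j - 1)`; on the side of the tuples this is the split according to whether the last column is
`k + 1`. The entry `a_{m,n}` occurs in `F_n` only for `n ≤ m`; for an increasing tuple whose last
column is at most `j` this constraint is automatic, which is why the only bound is `min k j`.
-/

lemma Fin.strictMono_snoc {α : Type*} [Preorder α] {n : ℕ} {u : Fin n → α} {x : α}
    (hu : StrictMono u) (hx : ∀ s, u s < x) : StrictMono (Fin.snoc u x : Fin (n + 1) → α) := by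
  intro s s' h
  induction s' using Fin.lastCases with
  | last =>
    obtain ⟨s, rfl⟩ := Fin.exists_castSucc_eq.2 h.ne
    simpa using hx s
  | cast s' =>
    obtain ⟨s, rfl⟩ := Fin.exists_castSucc_eq.2 (h.trans (Fin.castSucc_lt_last s')).ne
    simpa using hu (Fin.castSucc_lt_castSucc_iff.1 h)

def strictIncTuples (d b : ℕ) : Finset (Fin d → ℕ) :=
  (Fintype.piFinset fun _ : Fin d => Finset.Icc 1 b).filter
    fun t => ∀ s s' : Fin d, s < s' → t s < t s'

lemma mem_strictIncTuples {d b : ℕ} {t : Fin d → ℕ} :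
    t ∈ strictIncTuples d b ↔ StrictMono t ∧ ∀ s, 1 ≤ t s ∧ t s ≤ b := by
  simp [strictIncTuples, and_comm, StrictMono]

lemma strictIncTuples_zero (b : ℕ) : strictIncTuples 0 b = {Fin.elim0} := by
  ext t
  simp [mem_strictIncTuples, Subsingleton.elim t Fin.elim0, StrictMono]

lemma strictIncTuples_succ_zero (d : ℕ) : strictIncTuples (d + 1) 0 = ∅ := by
  ext t
  simp only [mem_strictIncTuples, Finset.notMem_empty, iff_false, not_and]
  exact fun _ h => by have := h 0; omega

lemma filter_strictIncTuples_last_le (d b : ℕ) :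
    (strictIncTuples (d + 1) (b + 1)).filter (fun t => t (Fin.last d) ≤ b) =
      strictIncTuples (d + 1) b := by
  ext t
  simp only [Finset.mem_filter, mem_strictIncTuples]
  constructor
  · rintro ⟨⟨ht, hb⟩, hlast⟩
    exact ⟨ht, fun s => ⟨(hb s).1, (ht.monotone (Fin.le_last s)).trans hlast⟩⟩
  · rintro ⟨ht, hb⟩
    exact ⟨⟨ht, fun s => ⟨(hb s).1, (hb s).2.trans b.le_succ⟩⟩, (hb _).2⟩

lemma sum_filter_strictIncTuples_last_gt {M : Type*} [AddCommMonoid M] (d b : ℕ)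
    (f : (Fin (d + 1) → ℕ) → M) :
    ∑ t ∈ (strictIncTuples (d + 1) (b + 1)).filter (fun t => ¬ t (Fin.last d) ≤ b), f t =
      ∑ u ∈ strictIncTuples d b, f (Fin.snoc u (b + 1)) := by
  have last_eq : ∀ t ∈ (strictIncTuples (d + 1) (b + 1)).filter
      (fun t => ¬ t (Fin.last d) ≤ b), t (Fin.last d) = b + 1 := by
    intro t ht
    simp only [Finset.mem_filter, mem_strictIncTuples] at ht
    have := (ht.1.2 (Fin.last d)).2
    omega
  refine Finset.sum_nbij' Fin.init (fun u => Fin.snoc u (b + 1)) ?_ ?_ ?_ ?_ ?_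
  · intro t ht
    have hlast := last_eq t ht
    simp only [Finset.mem_filter, mem_strictIncTuples] at ht ⊢
    obtain ⟨⟨ht, hb⟩, -⟩ := ht
    refine ⟨ht.comp Fin.strictMono_castSucc, fun s => ⟨(hb _).1, ?_⟩⟩
    have := ht (Fin.castSucc_lt_last s)
    simp only [Fin.init]
    omega
  · intro u hu
    simp only [mem_strictIncTuples] at hu
    simp only [Finset.mem_filter, mem_strictIncTuples, Fin.snoc_last]
    refine ⟨⟨Fin.strictMono_snoc hu.1 fun s => Nat.lt_succ_of_le (hu.2 s).2, fun s => ?_⟩,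
      by omega⟩
    induction s using Fin.lastCases with
    | last => simp
    | cast s => have := hu.2 s; simp only [Fin.snoc_castSucc]; omega
  · intro t ht
    rw [← last_eq t ht, Fin.snoc_init_self]
  · intro u _
    exact Fin.init_snoc _ _
  · intro t ht
    rw [← last_eq t ht, Fin.snoc_init_self]

lemma sum_strictIncTuples_succ_succ {M : Type*} [AddCommMonoid M] (d b : ℕ)
    (f : (Fin (d + 1) → ℕ) → M) :
    ∑ t ∈ strictIncTuples (d + 1) (b + 1), f t =
      ∑ t ∈ strictIncTuples (d + 1) b, f t +
        ∑ u ∈ strictIncTuples d b, f (Fin.snoc u (b + 1)) := by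
  rw [← Finset.sum_filter_add_sum_filter_not _ (fun t => t (Fin.last d) ≤ b),
    filter_strictIncTuples_last_le, sum_filter_strictIncTuples_last_gt]

section

variable {R : Type*} [Ring R] (a : ℕ → ℕ → R)

def monomialSum (i d b : ℕ) : R :=
  ∑ t ∈ strictIncTuples d b, (List.ofFn fun s : Fin d => a (i + (s : ℕ) + 1) (t s)).prod

lemma monomialSum_zero (i b : ℕ) : monomialSum a i 0 b = 1 := by
  simp [monomialSum, strictIncTuples_zero]

lemma monomialSum_succ_zero (i d : ℕ) : monomialSum a i (d + 1) 0 = 0 := by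
  simp [monomialSum, strictIncTuples_succ_zero]

lemma monomialSum_succ_succ (i d b : ℕ) :
    monomialSum a i (d + 1) (b + 1) =
      monomialSum a i (d + 1) b + monomialSum a i d b * a (i + d + 1) (b + 1) := by
  rw [monomialSum, sum_strictIncTuples_succ_succ, monomialSum, monomialSum, Finset.sum_mul]
  congr 1
  refine Finset.sum_congr rfl fun u _ => ?_
  rw [List.ofFn_succ', List.prod_concat]
  simp

def factorProdEntry (k i j : ℕ) : R :=
  if i ≤ j then monomialSum a i (j - i) (min k j) else 0

lemma factorProdEntry_zero (i j : ℕ) : factorProdEntry a 0 i j = if i = j then 1 else 0 := by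
  unfold factorProdEntry
  obtain hij | rfl | hij := lt_trichotomy i j
  · obtain ⟨d, rfl⟩ := Nat.exists_eq_add_of_lt hij
    simp [show i + d + 1 - i = d + 1 by omega, monomialSum_succ_zero, hij.ne]
  · simp [monomialSum_zero]
  · simp [hij.not_ge, hij.ne']

lemma factorProdEntry_succ (k i j : ℕ) :
    factorProdEntry a (k + 1) i j =
      factorProdEntry a k i j +
        if k + 1 ≤ j then factorProdEntry a k i (j - 1) * a j (k + 1) else 0 := by
  unfold factorProdEntry
  by_cases hij : i ≤ j
  swap
  · simp [hij, show ¬ i ≤ j - 1 by omega]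
  obtain ⟨d, rfl⟩ := Nat.exists_eq_add_of_le hij
  cases d with
  | zero =>
    rw [if_pos hij, if_pos hij, Nat.add_sub_cancel_left, monomialSum_zero, monomialSum_zero,
      left_eq_add, ite_eq_right_iff]
    intro hk
    rw [if_neg (by omega), zero_mul]
  | succ d =>
    by_cases hk : k + 1 ≤ i + (d + 1)
    · rw [if_pos hk, if_pos hij, if_pos hij, if_pos (by omega),
        show min (k + 1) (i + (d + 1)) = k + 1 by omega, show min k (i + (d + 1)) = k by omega,
        show min k (i + (d + 1) - 1) = k by omega, show i + (d + 1) - 1 - i = d by omega,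
        Nat.add_sub_cancel_left, monomialSum_succ_succ, ← add_assoc]
    · rw [if_neg hk, if_pos hij, if_pos hij, add_zero,
        show min (k + 1) (i + (d + 1)) = min k (i + (d + 1)) by omega]

lemma GLfactor_apply {N n : ℕ} (hn : 0 < n) (l j : Fin N) :
    GLfactor N a n l j =
      (if l = j then 1 else 0) + if (l : ℕ) = j - 1 ∧ n ≤ (j : ℕ) then a j n else 0 := by
  simp only [GLfactor, Matrix.of_apply]
  by_cases h : (l : ℕ) = j - 1 ∧ n ≤ (j : ℕ)
  · have : l ≠ j := fun e => by subst e; omega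
    rw [if_pos (by omega), if_pos h, if_neg this, zero_add, show (l : ℕ) + 1 = j by omega]
  · rw [if_neg (by omega), if_neg h, add_zero]

lemma of_mul_GLfactor {N n : ℕ} (c : ℕ → ℕ → R) (hn : 0 < n) :
    Matrix.of (fun i j : Fin N => c i j) * GLfactor N a n =
      Matrix.of fun i j : Fin N => c i j + if n ≤ (j : ℕ) then c i (j - 1) * a j n else 0 := by
  ext i j
  simp only [Matrix.mul_apply, Matrix.of_apply, GLfactor_apply a hn, mul_add, mul_ite, mul_one,
    mul_zero, Finset.sum_add_distrib, Finset.sum_ite_eq', Finset.mem_univ, if_true]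
  congr 1
  split_ifs with h
  · rw [Finset.sum_eq_single ⟨j - 1, by omega⟩]
    · simp [h]
    · intro l _ hl
      rw [if_neg]
      exact fun e => hl (Fin.ext e.1)
    · simp
  · simp [h]

lemma prod_GLfactor (N k : ℕ) :
    ((List.range k).map fun t => GLfactor N a (t + 1)).prod =
      Matrix.of fun i j : Fin N => factorProdEntry a k i j := by
  induction k with
  | zero =>
    ext i j
    simp [factorProdEntry_zero, Matrix.one_apply, Fin.val_inj]
  | succ k ih =>
    rw [List.range_succ, List.map_append, List.prod_append, ih, List.map_singleton,
      List.prod_singleton, of_mul_GLfactor a _ k.succ_pos]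
    ext i j
    simp [factorProdEntry_succ]

lemma GLmatrix_apply (N : ℕ) (v : ℕ → R) (i j : Fin N) :
    GLmatrix N a v i j = v i * factorProdEntry a (N - 1) i j := by
  rw [GLmatrix, Matrix.diagonal_mul, prod_GLfactor]
  rfl

end

theorem stmt11_general {R : Type*} [Ring R]
    (N : ℕ) (a : ℕ → ℕ → R) (v : ℕ → R) :
    (∀ i j : ℕ, 1 ≤ i → i + j ≤ N → ∀ (hi : i - 1 < N) (hij : i + j - 1 < N),
      GLmatrix N a v ⟨i - 1, hi⟩ ⟨i + j - 1, hij⟩ =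
        v (i - 1) *
          ∑ t ∈ (Fintype.piFinset fun _ : Fin j => Finset.Icc 1 (i + j - 1)) |>.filter
              (fun t => ∀ s s' : Fin j, s < s' → t s < t s'),
            (List.ofFn fun s : Fin j => a (i + (s : ℕ)) (t s)).prod) ∧
    (∀ i j : ℕ, 1 ≤ j → j < i → i ≤ N →
      ∀ (hi : i - 1 < N) (hij : i - j - 1 < N),
      GLmatrix N a v ⟨i - 1, hi⟩ ⟨i - j - 1, hij⟩ = 0) := by
  refine ⟨fun i j hi hjN _ _ => ?_, fun i j hj hji _ _ _ => ?_⟩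
  · rw [GLmatrix_apply]
    dsimp only
    rw [factorProdEntry, if_pos (by omega), show i + j - 1 - (i - 1) = j by omega,
      show min (N - 1) (i + j - 1) = i + j - 1 by omega, monomialSum]
    congr 1
    refine Finset.sum_congr rfl fun t _ => ?_
    congr 2 with s
    congr 1
    omega
  · rw [GLmatrix_apply]
    dsimp only
    rw [factorProdEntry, if_neg (by omega), mul_zero]

/-- Closed-form expression for the entries of `Z = T⁺U⁺`:
`z_{i,i+j} = v_{i−1} Σ_{1 ≤ t₁ < ⋯ < t_j ≤ i+j−1} a_{i,t₁}a_{i+1,t₂}⋯a_{i+j−1,t_j}`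
(with `v₀ = 1`), and `z_{i,i−j} = 0` for `j ≥ 1`. -/
theorem stmt11 {K R : Type*} [Field K] [Ring R] [Algebra K R]
    (q : K) (hq : q ≠ 0) (N : ℕ) (a : ℕ → ℕ → R) (v : ℕ → R)
    (hv0 : v 0 = 1)
    -- Gauss–Lusztig q-commutation relations
    (hav : ∀ m n, 1 ≤ n → n ≤ m → m ≤ N - 1 →
      a m n * v m = q ^ 2 • (v m * a m n))
    (haa : ∀ m n n', 1 ≤ n' → n' < n → n ≤ m → m ≤ N - 1 →
      a m n * a m n' = q ^ 2 • (a m n' * a m n))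
    (hadj : ∀ m n n', 1 ≤ n → n ≤ n' → n ≤ m → m ≤ N - 1 → n' ≤ m - 1 →
      a m n * a (m - 1) n' = q ^ 2 • (a (m - 1) n' * a m n))
    -- all other pairs commute
    (hcom1 : ∀ m n m' n', m' + 2 ≤ m → Commute (a m n) (a m' n'))
    (hcom2 : ∀ m n n', n' < n → Commute (a m n) (a (m - 1) n'))
    (hcom3 : ∀ m n m', m' ≠ m → Commute (a m n) (v m'))
    (hcom4 : ∀ m m', Commute (v m) (v m')) :
    (∀ i j : ℕ, 1 ≤ i → i + j ≤ N → ∀ (hi : i - 1 < N) (hij : i + j - 1 < N),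
      GLmatrix N a v ⟨i - 1, hi⟩ ⟨i + j - 1, hij⟩ =
        v (i - 1) *
          ∑ t ∈ (Fintype.piFinset fun _ : Fin j => Finset.Icc 1 (i + j - 1)) |>.filter
              (fun t => ∀ s s' : Fin j, s < s' → t s < t s'),
            (List.ofFn fun s : Fin j => a (i + (s : ℕ)) (t s)).prod) ∧
    (∀ i j : ℕ, 1 ≤ j → j < i → i ≤ N →
      ∀ (hi : i - 1 < N) (hij : i - j - 1 < N),
      GLmatrix N a v ⟨i - 1, hi⟩ ⟨i - j - 1, hij⟩ = 0) :=
  stmt11_general N a v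
end
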